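/- arXiv:2501.00472 — 2 statements merged into one kernel-verified Lean document; each statement's English description precedes it below -/
import Mathlib

section
/- Let L ≥ 1 be an integer and N an even integer with 2 ≤ N ≤ L+1. Then the spatial variance of the clustered array satisfies χ(K_N^L) = (1/4)·((L + 1 − N/2)² + (1/3)·(N²/4 − 1)). -/
/-- Spatial mean of a finite set of integer sensor positions. -/
noncomputable def spatialMean (D : Finset ℤ) : ℝ :=
  (∑ d ∈ D, (d : ℝ)) / D.card

/-- Spatial variance of a finite set of integer sensor positions. -/
noncomputable def spatialVar (D : Finset ℤ) : ℝ :=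
  (∑ d ∈ D, ((d : ℝ) - spatialMean D) ^ 2) / D.card

/-- The `N`-sensor uniform linear array `U_N = {0, 1, ..., N-1}` as a set of integers. -/
noncomputable def ULA (N : ℕ) : Finset ℤ := Finset.Ico (0 : ℤ) (N : ℤ)

/-- The clustered array `K_N^L = U_{N/2} ∪ (L - U_{N/2})`. -/
noncomputable def clusteredArray (N L : ℕ) : Finset ℤ :=
  ULA (N / 2) ∪ (ULA (N / 2)).image (fun u => (L : ℤ) - u)

/-! The clustered array is invariant under the reflection `d ↦ L - d`, so its mean is `L / 2` and
its two halves `U_{N/2}` and `L - U_{N/2}` contribute equally to the variance. The second moment of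
`U_n` about `L / 2` is `n` times the squared distance `(L + 1 - n)² / 4` between the centres plus
`n` times the variance `(n² - 1) / 12` of `U_n`; with `n = N / 2` this is the formula. -/

open Finset

theorem ULA_eq_map_range (n : ℕ) : ULA n = (range n).map Nat.castEmbedding := by
  ext d
  simp only [ULA, mem_Ico, mem_map, mem_range, Nat.castEmbedding_apply]
  constructor
  · rintro ⟨h0, hn⟩
    exact ⟨d.toNat, by omega, by omega⟩
  · rintro ⟨i, hi, rfl⟩
    omega

theorem sum_ULA {β : Type*} [AddCommMonoid β] (n : ℕ) (f : ℤ → β) :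
    ∑ d ∈ ULA n, f d = ∑ i ∈ range n, f i := by
  rw [ULA_eq_map_range, sum_map]
  rfl

theorem mem_clusteredArray {N L : ℕ} {d : ℤ} :
    d ∈ clusteredArray N L ↔
      (0 ≤ d ∧ d < (N / 2 : ℕ)) ∨ ((L : ℤ) - (N / 2 : ℕ) < d ∧ d ≤ L) := by
  simp only [clusteredArray, ULA, mem_union, mem_Ico, mem_image]
  constructor
  · rintro (h | ⟨u, hu, rfl⟩) <;> omega
  · rintro (h | h)
    · exact Or.inl h
    · exact Or.inr ⟨L - d, by omega, by ring⟩

theorem disjoint_ULA_image_sub {n L : ℕ} (h : 2 * n ≤ L + 1) :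
    Disjoint (ULA n) ((ULA n).image ((L : ℤ) - ·)) := by
  simp only [disjoint_left, ULA, mem_Ico, mem_image]
  rintro d hd ⟨u, hu, rfl⟩
  omega

theorem sum_clusteredArray {β : Type*} [AddCommMonoid β] {N L : ℕ} (hNL : N ≤ L + 1)
    (f : ℤ → β) :
    ∑ d ∈ clusteredArray N L, f d = ∑ i ∈ range (N / 2), (f i + f (L - i)) := by
  rw [clusteredArray, sum_union (disjoint_ULA_image_sub (by omega)),
    sum_image fun _ _ _ _ h => sub_right_injective h, sum_ULA, sum_ULA (f := fun d => f (L - d)),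
    sum_add_distrib]

theorem card_clusteredArray {N L : ℕ} (hNL : N ≤ L + 1) :
    (clusteredArray N L).card = 2 * (N / 2) := by
  rw [card_eq_sum_ones, sum_clusteredArray hNL, sum_const, card_range, smul_eq_mul]
  ring

theorem spatialMean_eq_half_of_sub_mem {D : Finset ℤ} (hD : D.Nonempty) (c : ℤ)
    (hc : ∀ d ∈ D, c - d ∈ D) : spatialMean D = c / 2 := by
  have hsum : ∑ d ∈ D, (d : ℝ) = ∑ d ∈ D, ((c : ℝ) - d) :=
    sum_nbij' (c - ·) (c - ·) hc hc (fun _ _ => sub_sub_cancel c _)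
      (fun _ _ => sub_sub_cancel c _) (fun _ _ => by push_cast; ring)
  have hcard : (D.card : ℝ) ≠ 0 := by simpa using hD.card_ne_zero
  rw [sum_sub_distrib, sum_const, nsmul_eq_mul] at hsum
  rw [spatialMean, div_eq_iff hcard]
  linarith

theorem spatialMean_clusteredArray {N L : ℕ} (hN : 2 ≤ N) :
    spatialMean (clusteredArray N L) = L / 2 := by
  have hne : (clusteredArray N L).Nonempty := ⟨0, mem_clusteredArray.2 (Or.inl (by omega))⟩
  rw [spatialMean_eq_half_of_sub_mem hne L, Int.cast_natCast]
  intro d hd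
  rw [mem_clusteredArray] at hd ⊢
  omega

theorem sum_range_sub_sq (n : ℕ) (c : ℝ) :
    ∑ i ∈ range n, ((i : ℝ) - c) ^ 2 =
      n * (((n : ℝ) - 1) / 2 - c) ^ 2 + n * ((n : ℝ) ^ 2 - 1) / 12 := by
  induction n with
  | zero => simp
  | succ n ih =>
    rw [sum_range_succ, ih]
    push_cast
    ring

theorem spatialVar_clusteredArray_general
    (L N : ℕ) (hNeven : Even N) (hN2 : 2 ≤ N) (hNL : N ≤ L + 1) :
    spatialVar (clusteredArray N L)
      = (1 / 4) * (((L : ℝ) + 1 - (N : ℝ) / 2) ^ 2 + (1 / 3) * ((N : ℝ) ^ 2 / 4 - 1)) := by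
  obtain ⟨M, rfl⟩ := hNeven
  have hM : (M + M) / 2 = M := by omega
  have hreflect :
      ∀ i : ℕ, (((L : ℤ) - i : ℤ) - (L / 2 : ℝ)) ^ 2 = ((i : ℝ) - L / 2) ^ 2 := by
    intro i
    push_cast
    ring
  have hM0 : (M : ℝ) ≠ 0 := by norm_cast; omega
  rw [spatialVar, spatialMean_clusteredArray hN2, card_clusteredArray hNL,
    sum_clusteredArray hNL, hM]
  simp only [hreflect, Int.cast_natCast, ← two_mul, ← mul_sum, sum_range_sub_sq]
  push_cast
  field_simp
  ring

/-- The spatial variance of the clustered array equals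
`(1/4)·((L + 1 − N/2)² + (1/3)·(N²/4 − 1))`. -/
theorem spatialVar_clusteredArray
    (L N : ℕ) (hL : 1 ≤ L) (hNeven : Even N) (hN2 : 2 ≤ N) (hNL : N ≤ L + 1) :
    spatialVar (clusteredArray N L)
      = (1 / 4) * (((L : ℝ) + 1 - (N : ℝ) / 2) ^ 2 + (1 / 3) * ((N : ℝ) ^ 2 / 4 - 1)) :=
  spatialVar_clusteredArray_general L N hNeven hN2 hNL
end

section
/- Let N_t ≥ 1 be an integer, N_r ≥ 2 an even integer, and set L = (N_t + 1)·N_r/2 − 1. Let D_t = (N_r/2)·U_{N_t} and D_r = K_{N_r}^L. Then the sum co-array is nonredundant: |D_t + D_r| = N_t·N_r = |D_t|·|D_r|; equivalently, the map (d_t, d_r) ↦ d_t + d_r is injective on D_t × D_r. -/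
open scoped Pointwise

/-!
Write `N_r = 2h`. Then `D_t = h·U_{N_t}`, and the two clusters of `D_r` are the intervals
`[0, h)` and `[L + 1 - h, L + 1) = [N_t h, (N_t + 1) h)`. Division with remainder by `h` shows
that `h·U_{N_t}` plus an interval of length `h` starting at `a` is the interval of length `N_t h`
starting at `a`, so `D_t + D_r = [0, N_t h) ∪ [N_t h, 2 N_t h)`, which has `N_t N_r` elements.
Since `|D_t| ≤ N_t`, `|D_r| ≤ N_r` and always `|D_t + D_r| ≤ |D_t|·|D_r|`, these bounds are attained.
-/

open Finset

theorem Finset.card_mul_card_eq_of_card_add_eq {α : Type*} [DecidableEq α] [Add α]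
    {s t : Finset α} {m n : ℕ} (hs : #s ≤ m) (ht : #t ≤ n) (hst : #(s + t) = m * n) :
    #s * #t = m * n :=
  le_antisymm (Nat.mul_le_mul hs ht) (hst ▸ card_add_le)

lemma mem_ULA {N : ℕ} {x : ℤ} : x ∈ ULA N ↔ 0 ≤ x ∧ x < N := by
  simp [ULA]

lemma card_ULA (N : ℕ) : #(ULA N) = N := by
  simp [ULA]

lemma image_mul_ULA_add_Ico (n h : ℕ) (a : ℤ) :
    (ULA n).image ((h : ℤ) * ·) + Ico a (a + h) = Ico a (a + n * h) := by
  ext x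
  simp only [mem_add, mem_image, mem_ULA, mem_Ico]
  constructor
  · rintro ⟨_, ⟨m, ⟨hm0, hmn⟩, rfl⟩, y, ⟨hay, hyh⟩, rfl⟩
    constructor <;> nlinarith
  · rintro ⟨hax, hxn⟩
    have hh : (0 : ℤ) < h := by
      by_contra! hh
      nlinarith [Int.natCast_nonneg n]
    refine ⟨h * ((x - a) / h), ⟨(x - a) / h, ⟨Int.ediv_nonneg (by omega) hh.le, ?_⟩, rfl⟩,
      a + (x - a) % h, ⟨by simp [Int.emod_nonneg _ hh.ne'], by simp [Int.emod_lt_of_pos _ hh]⟩,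
      by linarith [Int.mul_ediv_add_emod (x - a) h]⟩
    rw [Int.ediv_lt_iff_lt_mul hh]
    linarith

lemma image_sub_ULA (h : ℕ) (c : ℤ) :
    (ULA h).image (c - ·) = Ico (c + 1 - h) (c + 1) := by
  ext x
  simp only [mem_image, mem_ULA, mem_Ico]
  constructor
  · rintro ⟨u, ⟨hu0, huh⟩, rfl⟩
    omega
  · rintro ⟨hx1, hx2⟩
    exact ⟨c - x, by omega, by ring⟩

lemma clusteredArray_two_mul (h L : ℕ) :
    clusteredArray (2 * h) L = Ico 0 (h : ℤ) ∪ Ico ((L : ℤ) + 1 - h) (L + 1) := by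
  rw [clusteredArray, Nat.mul_div_cancel_left h two_pos, image_sub_ULA, ULA]

lemma card_clusteredArray_le (N L : ℕ) : #(clusteredArray N L) ≤ N :=
  calc #(clusteredArray N L)
      ≤ #(ULA (N / 2)) + #((ULA (N / 2)).image (fun u => (L : ℤ) - u)) := card_union_le _ _
    _ ≤ N / 2 + N / 2 := Nat.add_le_add (card_ULA _).le (card_image_le.trans (card_ULA _).le)
    _ ≤ N := by omega

theorem sum_coarray_nonredundant_general
    (Nt Nr : ℕ) (hNr : 2 ≤ Nr) (hNrEven : Even Nr)
    (L : ℕ) (hL : L = (Nt + 1) * Nr / 2 - 1) :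
    ((ULA Nt).image (fun m => ((Nr : ℤ) / 2) * m) + clusteredArray Nr L).card
      = Nt * Nr ∧
    Nt * Nr = ((ULA Nt).image (fun m => ((Nr : ℤ) / 2) * m)).card
      * (clusteredArray Nr L).card := by
  obtain ⟨h, rfl⟩ := hNrEven
  rw [← two_mul] at hNr hL ⊢
  have hcoef : ((2 * h : ℕ) : ℤ) / 2 = h := by push_cast; omega
  have hend : L + 1 = Nt * h + h := by
    rw [hL, show (Nt + 1) * (2 * h) = 2 * (Nt * h + h) by ring, Nat.mul_div_cancel_left _ two_pos]
    omega
  have hstart : (L : ℤ) + 1 - h = Nt * h := by linarith [congrArg (Nat.cast : ℕ → ℤ) hend]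
  have hlow : (ULA Nt).image ((h : ℤ) * ·) + Ico 0 (h : ℤ) = Ico 0 (Nt * h : ℤ) := by
    simpa using image_mul_ULA_add_Ico Nt h 0
  have hsum :
      (ULA Nt).image ((h : ℤ) * ·) + clusteredArray (2 * h) L = Ico 0 (2 * (Nt * h : ℤ)) := by
    rw [clusteredArray_two_mul, add_union, hstart, show (L : ℤ) + 1 = Nt * h + h by
      exact_mod_cast hend, hlow, image_mul_ULA_add_Ico, two_mul,
      Ico_union_Ico_eq_Ico (by positivity) (by nlinarith [Int.natCast_nonneg Nt])]
  have hcard : #((ULA Nt).image ((h : ℤ) * ·) + clusteredArray (2 * h) L) = Nt * (2 * h) := by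
    rw [hsum, Int.card_Ico, sub_zero,
      show (2 * (Nt * h : ℤ)) = ((Nt * (2 * h) : ℕ) : ℤ) by push_cast; ring, Int.toNat_natCast]
  simp only [hcoef]
  exact ⟨hcard, (card_mul_card_eq_of_card_add_eq (card_image_le.trans (card_ULA Nt).le)
    (card_clusteredArray_le _ L) hcard).symm⟩

/-- With `L = (N_t + 1)·N_r/2 − 1`, the sum co-array of the
dilated-ULA transmit array and the clustered receive array is nonredundant:
`|D_t + D_r| = N_t·N_r = |D_t|·|D_r|`. -/
theorem sum_coarray_nonredundant
    (Nt Nr : ℕ) (hNt : 1 ≤ Nt) (hNr : 2 ≤ Nr) (hNrEven : Even Nr)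
    (L : ℕ) (hL : L = (Nt + 1) * Nr / 2 - 1) :
    ((ULA Nt).image (fun m => ((Nr : ℤ) / 2) * m) + clusteredArray Nr L).card
      = Nt * Nr ∧
    Nt * Nr = ((ULA Nt).image (fun m => ((Nr : ℤ) / 2) * m)).card
      * (clusteredArray Nr L).card :=
  sum_coarray_nonredundant_general Nt Nr hNr hNrEven L hL
end
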